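/- arXiv:2409.06095 — 5 statements merged into one kernel-verified Lean document; each statement's English description precedes it below -/
import Mathlib

section
/- Let f : ℝ → ℝ be a monotone nondecreasing, right-continuous function (a Stieltjes function) and let μ_f denote its Lebesgue–Stieltjes measure. Let K ⊆ ℝ be a compact set such that f is continuous at every point of K and such that the image f(K) is Lebesgue negligible (has one-dimensional Lebesgue measure zero). Then μ_f(K) = 0. -/
/-!
Cover `f '' K` by an open set `U` of small Lebesgue measure. A connected component `C` of `U` is
an interval, and the part `S` of `K` mapped into `C` has `μ_f S ≤ |C|`: `S` lies in
`[inf S, sup S]`, whose `μ_f`-measure is `f (sup S) - f (inf S)` because `f` is continuous at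
`inf S ∈ K`, and both endpoint values lie in the closure of `C`. Compactness of `K` leaves finitely
many components to sum over, so `μ_f K ≤ |U|`.
-/

open Set MeasureTheory Topology

theorem Set.OrdConnected.Ioo_subset_of_mem_closure {α : Type*} [LinearOrder α]
    [TopologicalSpace α] [OrderClosedTopology α] {V : Set α} (hV : V.OrdConnected) {x y : α}
    (hx : x ∈ closure V) (hy : y ∈ closure V) : Ioo x y ⊆ V := by
  intro z ⟨hxz, hzy⟩
  obtain ⟨p, hpz, hpV⟩ := mem_closure_iff.1 hx (Iio z) isOpen_Iio hxz
  obtain ⟨q, hzq, hqV⟩ := mem_closure_iff.1 hy (Ioi z) isOpen_Ioi hzy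
  exact hV.out hpV hqV ⟨hpz.le, hzq.le⟩

theorem MeasureTheory.sum_measure_connectedComponentIn_le {X : Type*} [TopologicalSpace X]
    [LocallyConnectedSpace X] [MeasurableSpace X] [OpensMeasurableSpace X] [DecidableEq (Set X)]
    (μ : Measure X) {U : Set X} (hU : IsOpen U) (t : Finset X) :
    ∑ C ∈ t.image (connectedComponentIn U), μ C ≤ μ U := by
  have hdisj : (t.image (connectedComponentIn U) : Set (Set X)).PairwiseDisjoint id := by
    simp only [Finset.coe_image]
    rintro _ ⟨x, -, rfl⟩ _ ⟨y, -, rfl⟩ hne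
    refine disjoint_left.2 fun z hxz hyz => hne ?_
    exact (connectedComponentIn_eq hxz).trans (connectedComponentIn_eq hyz).symm
  calc ∑ C ∈ t.image (connectedComponentIn U), μ C
      = μ (⋃ C ∈ t.image (connectedComponentIn U), C) :=
        (measure_biUnion_finset hdisj fun _ hC => by
          obtain ⟨x, -, rfl⟩ := Finset.mem_image.1 hC
          exact hU.connectedComponentIn.measurableSet).symm
    _ ≤ μ U := measure_mono <| iUnion₂_subset fun _ hC => by
          obtain ⟨x, -, rfl⟩ := Finset.mem_image.1 hC
          exact connectedComponentIn_subset U x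

namespace StieltjesFunction

variable {R : Type*} [ConditionallyCompleteLinearOrder R] [TopologicalSpace R] [OrderTopology R]
  [MeasurableSpace R] [BorelSpace R] [SecondCountableTopology R] [DenselyOrdered R]

theorem measure_Icc_of_continuousAt (f : StieltjesFunction R) {a : R} (ha : ContinuousAt f a)
    (b : R) : f.measure (Icc a b) = ENNReal.ofReal (f b - f a) := by
  rw [measure_Icc, f.mono.continuousWithinAt_Iio_iff_leftLim_eq.1 ha.continuousWithinAt]

theorem measure_le_volume_of_mapsTo (f : StieltjesFunction R) {S : Set R} {V : Set ℝ}
    (hS : BddBelow S) (hS' : BddAbove S) (hcont : ∀ x ∈ closure S, ContinuousAt f x)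
    (hV : V.OrdConnected) (hSV : MapsTo f S V) : f.measure S ≤ volume V := by
  rcases S.eq_empty_or_nonempty with rfl | hne
  · simp
  have hclosure : ∀ x ∈ closure S, f x ∈ closure V := fun x hx =>
    closure_mono hSV.image_subset ((hcont x hx).continuousWithinAt.mem_closure_image hx)
  have ha := csInf_mem_closure hne hS
  have hb := csSup_mem_closure hne hS'
  calc f.measure S ≤ f.measure (Icc (sInf S) (sSup S)) :=
        measure_mono fun x hx => ⟨csInf_le hS hx, le_csSup hS' hx⟩
    _ = volume (Ioo (f (sInf S)) (f (sSup S))) := by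
        rw [f.measure_Icc_of_continuousAt (hcont _ ha), Real.volume_Ioo]
    _ ≤ volume V := measure_mono (hV.Ioo_subset_of_mem_closure (hclosure _ ha) (hclosure _ hb))

theorem measure_inter_preimage_le_volume (f : StieltjesFunction R) {K : Set R} {V : Set ℝ}
    (hK : IsCompact K) (hcont : ∀ x ∈ K, ContinuousAt f x) (hV : V.OrdConnected) :
    f.measure (K ∩ f ⁻¹' V) ≤ volume V :=
  f.measure_le_volume_of_mapsTo (hK.bddBelow.mono inter_subset_left)
    (hK.bddAbove.mono inter_subset_left)
    (fun x hx => hcont x (closure_minimal inter_subset_left hK.isClosed hx)) hV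
    fun _ hx => hx.2

end StieltjesFunction

/-- If `f` is a Stieltjes function (monotone nondecreasing and right-continuous),
`K` is a compact set of continuity points of `f`, and the image `f '' K` is
Lebesgue negligible, then the Lebesgue–Stieltjes measure of `K` vanishes. -/
theorem stieltjes_measure_eq_zero_of_image_null
    (f : StieltjesFunction ℝ) (K : Set ℝ) (hK : IsCompact K)
    (hcont : ∀ x ∈ K, ContinuousAt f x)
    (himg : MeasureTheory.volume (f '' K) = 0) :
    f.measure K = 0 := by
  classical
  refine le_antisymm (ENNReal.le_of_forall_pos_le_add fun ε hε _ => ?_) bot_le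
  obtain ⟨U, hKU, hU, hUε⟩ := exists_isOpen_lt_of_lt (f '' K) ε (by rwa [himg, ENNReal.coe_pos])
  have hnhds : ∀ x ∈ K, f ⁻¹' connectedComponentIn U (f x) ∈ 𝓝 x := fun x hx =>
    (hcont x hx).preimage_mem_nhds (hU.connectedComponentIn.mem_nhds
      (mem_connectedComponentIn (hKU (mem_image_of_mem f hx))))
  obtain ⟨t, -, hKt⟩ := hK.elim_nhds_subcover _ hnhds
  set s := (t.image f).image (connectedComponentIn U)
  have hKs : K ⊆ ⋃ C ∈ s, K ∩ f ⁻¹' C := fun x hx => by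
    obtain ⟨y, hy, hxy⟩ := mem_iUnion₂.1 (hKt hx)
    exact mem_iUnion₂.2 ⟨_, Finset.mem_image_of_mem _ (Finset.mem_image_of_mem f hy), hx, hxy⟩
  have hpiece : ∀ C ∈ s, f.measure (K ∩ f ⁻¹' C) ≤ volume C := by
    simp only [s, Finset.forall_mem_image]
    exact fun _ _ => f.measure_inter_preimage_le_volume hK hcont
      isPreconnected_connectedComponentIn.ordConnected
  calc f.measure K ≤ ∑ C ∈ s, f.measure (K ∩ f ⁻¹' C) :=
        (measure_mono hKs).trans (measure_biUnion_finset_le _ _)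
    _ ≤ ∑ C ∈ s, volume C := Finset.sum_le_sum hpiece
    _ ≤ volume U := sum_measure_connectedComponentIn_le _ hU _
    _ ≤ 0 + ε := by rw [zero_add]; exact hUε.le
end

section
/- Let T > 0 and C ≥ 0. Let μ be a finite Borel measure on ℝ, and for each t ∈ [0,T] let ν_t be a finite Borel measure on ℝ. Assume that for all s, t ∈ [0,T] with s ≠ t and every Borel set B ⊆ ℝ one has ν_t(B) ≤ C·( Leb(B)/|t−s| + μ([min(s,t), max(s,t)]) ), where Leb denotes one-dimensional Lebesgue measure. Then the set S = { t ∈ [0,T] : ν_t is not absolutely continuous with respect to Leb } is at most countable. -/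
/-!
On a Lebesgue-null set `B` the estimate with `s ↓ t` loses its first term and gives
`ν t B ≤ C μ([t, s]) → C μ {t}`. Hence `ν t ≪ Leb` whenever `t < T` is not an atom of `μ`,
and a finite measure has only countably many atoms.
-/

open MeasureTheory Set Filter Topology ENNReal

theorem le_mul_measure_singleton_of_forall_Ioc_le {μ : Measure ℝ} [IsFiniteMeasureOnCompacts μ]
    {a c : ℝ≥0∞} {t T : ℝ} (hc : c ≠ ∞) (htT : t < T)
    (h : ∀ s ∈ Ioc t T, a ≤ c * μ (Icc t s)) :
    a ≤ c * μ {t} := by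
  have hlim : Tendsto (fun δ ↦ c * μ (Icc (t - δ) (t + δ))) (𝓝[>] 0) (𝓝 (c * μ {t})) :=
    ENNReal.Tendsto.const_mul (tendsto_measure_Icc_nhdsWithin_right' μ t) (Or.inr hc)
  refine ge_of_tendsto hlim ?_
  filter_upwards [Ioo_mem_nhdsGT (sub_pos.2 htT)] with δ ⟨hδ, hδT⟩
  calc a ≤ c * μ (Icc t (t + δ)) := h _ ⟨by linarith, by linarith⟩
    _ ≤ c * μ (Icc (t - δ) (t + δ)) := by gcongr; linarith

theorem oleinik_abstract_countable_general
    (T : ℝ) (C : ℝ)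
    (μ : Measure ℝ) [IsFiniteMeasure μ]
    (ν : ℝ → Measure ℝ)
    (h : ∀ s ∈ Icc (0 : ℝ) T, ∀ t ∈ Icc (0 : ℝ) T, s ≠ t →
      ∀ B : Set ℝ, MeasurableSet B →
        ν t B ≤ ENNReal.ofReal C *
          (volume B / ENNReal.ofReal |t - s| + μ (Icc (min s t) (max s t)))) :
    Set.Countable {t ∈ Icc (0 : ℝ) T | ¬ (ν t).AbsolutelyContinuous volume} := by
  have hatoms : {t | 0 < μ {t}}.Countable := by
    simpa using Measure.countable_meas_level_set_pos (μ := μ) measurable_id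
  refine (hatoms.insert T).mono ?_
  rintro t ⟨ht, hnac⟩
  rcases ht.2.eq_or_lt with rfl | htT
  · exact mem_insert _ _
  refine mem_insert_of_mem _ (show 0 < μ {t} from pos_iff_ne_zero.2 fun hμt ↦ hnac ?_)
  refine .mk fun B hB hB0 ↦ ?_
  have hle : ν t B ≤ ENNReal.ofReal C * μ {t} := by
    refine le_mul_measure_singleton_of_forall_Ioc_le ofReal_ne_top htT fun s hs ↦ ?_
    simpa [hB0, hs.1.le] using h s ⟨ht.1.trans hs.1.le, hs.2⟩ t ht hs.1.ne' B hB
  simpa [hμt] using hle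

/-- Abstract Ol\u0065inik-type estimate, countability form: under the two-sided decay
estimate, the set of times `t ∈ [0,T]` at which `ν t` fails to be absolutely
continuous with respect to Lebesgue measure is at most countable. -/
theorem oleinik_abstract_countable
    (T : ℝ) (hT : 0 < T) (C : ℝ) (hC : 0 ≤ C)
    (μ : Measure ℝ) [IsFiniteMeasure μ]
    (ν : ℝ → Measure ℝ) (hνfin : ∀ t ∈ Icc (0 : ℝ) T, IsFiniteMeasure (ν t))
    (h : ∀ s ∈ Icc (0 : ℝ) T, ∀ t ∈ Icc (0 : ℝ) T, s ≠ t →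
      ∀ B : Set ℝ, MeasurableSet B →
        ν t B ≤ ENNReal.ofReal C *
          (volume B / ENNReal.ofReal |t - s| + μ (Icc (min s t) (max s t)))) :
    Set.Countable {t ∈ Icc (0 : ℝ) T | ¬ (ν t).AbsolutelyContinuous volume} :=
  oleinik_abstract_countable_general T C μ ν h
end

section
/- Let β > 0, let n ≥ 1 be a natural number, and let p_0, p_1, …, p_n be real numbers such that |p_0| ≤ β/2, |p_k| ≥ β/4 for every k ∈ {0,…,n}, and |p_n| ≥ β. Then Σ_{k=1}^{n} |p_k − p_{k−1}|·|p_k| ≥ β²/8. -/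
lemma telescope_abs (p : ℕ → ℝ) (n : ℕ) :
    |p n - p 0| ≤ ∑ k ∈ Finset.Icc 1 n, |p k - p (k - 1)| := by
  induction n with
  | zero => simp
  | succ m ih =>
    rw [show Finset.Icc 1 (m+1) = insert (m+1) (Finset.Icc 1 m) by
      ext x; simp [Finset.mem_Icc]; omega]
    rw [Finset.sum_insert (by simp)]
    have h3 : |p (m+1) - p 0| ≤ |p (m+1) - p m| + ∑ k ∈ Finset.Icc 1 m, |p k - p (k - 1)| :=
      (abs_sub_le (p (m+1)) (p m) (p 0)).trans (by gcongr)
    simpa using h3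

/-- Discrete interaction estimate: a front arising with strength `≤ β/2`,
keeping strength `≥ β/4`, and reaching strength `≥ β` after `n` interactions
produces a total interaction amount `Σ |p k - p (k-1)|·|p k| ≥ β²/8`. -/
theorem interaction_amount_lower_bound
    (β : ℝ) (hβ : 0 < β) (n : ℕ) (hn : 1 ≤ n) (p : ℕ → ℝ)
    (h0 : |p 0| ≤ β / 2)
    (hlow : ∀ k ≤ n, β / 4 ≤ |p k|)
    (hend : β ≤ |p n|) :
    β ^ 2 / 8 ≤ ∑ k ∈ Finset.Icc 1 n, |p k - p (k - 1)| * |p k| := by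
  have h1 : ∑ k ∈ Finset.Icc 1 n, (β / 4) * |p k - p (k - 1)| ≤
      ∑ k ∈ Finset.Icc 1 n, |p k - p (k - 1)| * |p k| := by
    apply Finset.sum_le_sum
    intro k hk
    rw [mul_comm]
    have hk' := Finset.mem_Icc.mp hk
    exact mul_le_mul_of_nonneg_left (hlow k hk'.2) (abs_nonneg _)
  have h2 : β / 2 ≤ ∑ k ∈ Finset.Icc 1 n, |p k - p (k - 1)| := by
    have ht := telescope_abs p n
    have : β / 2 ≤ |p n - p 0| := by
      have := abs_sub_abs_le_abs_sub (p n) (p 0); linarith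
    linarith
  calc β ^ 2 / 8 = (β / 4) * (β / 2) := by ring
    _ ≤ ∑ k ∈ Finset.Icc 1 n, (β / 4) * |p k - p (k - 1)| := by
        rw [← Finset.mul_sum]; exact mul_le_mul_of_nonneg_left h2 (by linarith)
    _ ≤ _ := h1
end

section
/- Let L ≥ 2 be a natural number, let σ : {0,…,L−1} → ℝ, and let i satisfy i + 1 ≤ L − 1 with σ_i · σ_{i+1} ≥ 0. Define the merged sequence τ : {0,…,L−2} → ℝ by τ_k = σ_k for k < i, τ_i = σ_i + σ_{i+1}, and τ_k = σ_{k+1} for k > i. Then TV(τ) = TV(σ) and Q(τ) = Q(σ) − |σ_i|·|σ_{i+1}|, where TV(σ) = Σ_k |σ_k| and Q(σ) = Σ_{j<k} |σ_j|·|σ_k|. -/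
/-!
Write `S = Σ |σ k|` and `P = Σ |σ k|²`. Since `2 Q = S² - P`, it suffices to track `S` and `P`
through the merge. Waves of the same sign satisfy `|σ i + σ (i+1)| = |σ i| + |σ (i+1)|`, so `S` is
unchanged, while `P` grows by exactly `2 |σ i| |σ (i+1)|`, the cross term of
`(|σ i| + |σ (i+1)|)²`.
-/

open Finset

lemma abs_add_eq_add_abs_of_mul_nonneg {R : Type*} [Ring R] [LinearOrder R] [IsStrictOrderedRing R]
    {a b : R} (h : 0 ≤ a * b) : |a + b| = |a| + |b| :=
  (abs_add_eq_add_abs_iff a b).mpr (mul_nonneg_iff.mp h)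

lemma two_mul_sum_range_sum_Ico_mul {R : Type*} [CommRing R] (f : ℕ → R) (n : ℕ) :
    2 * ∑ j ∈ range n, ∑ k ∈ Ico (j + 1) n, f j * f k
      = (∑ k ∈ range n, f k) ^ 2 - ∑ k ∈ range n, f k ^ 2 := by
  induction n with
  | zero => simp
  | succ n ih =>
    have split_top : ∀ j ∈ range n,
        ∑ k ∈ Ico (j + 1) (n + 1), f j * f k = ∑ k ∈ Ico (j + 1) n, f j * f k + f j * f n :=
      fun j hj => sum_Ico_succ_top (mem_range.mp hj) _
    rw [sum_range_succ, sum_congr rfl split_top, sum_add_distrib, ← sum_mul, Ico_self,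
      sum_empty, sum_range_succ f, sum_range_succ (f · ^ 2)]
    linear_combination ih

lemma sum_range_add_of_merge {M : Type*} [AddCommMonoid M] {g h : ℕ → M} {i : ℕ}
    (hlt : ∀ k < i, g k = h k) (hgt : ∀ k, i < k → g k = h (k + 1)) {m : ℕ} (hm : i < m) :
    ∑ k ∈ range m, g k + (h i + h (i + 1)) = ∑ k ∈ range (m + 1), h k + g i := by
  induction m, hm using Nat.le_induction with
  | base =>
    have hprefix : ∑ k ∈ range i, g k = ∑ k ∈ range i, h k :=
      sum_congr rfl fun k hk => hlt k (mem_range.mp hk)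
    simp only [sum_range_succ, hprefix]
    abel
  | succ m hm ih =>
    rw [sum_range_succ g, sum_range_succ h (m + 1), hgt m hm, add_right_comm, ih, add_right_comm]

theorem glimm_functional_interaction_no_cancellation_general
    (L : ℕ) (σ τ : ℕ → ℝ) (i : ℕ) (hi : i + 1 ≤ L - 1)
    (hsign : 0 ≤ σ i * σ (i + 1))
    (hτlt : ∀ k < i, τ k = σ k)
    (hτi : τ i = σ i + σ (i + 1))
    (hτgt : ∀ k, i < k → τ k = σ (k + 1)) :
    (∑ k ∈ Finset.range (L - 1), |τ k|) = (∑ k ∈ Finset.range L, |σ k|) ∧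
    (∑ j ∈ Finset.range (L - 1), ∑ k ∈ Finset.Ico (j + 1) (L - 1), |τ j| * |τ k|)
      = (∑ j ∈ Finset.range L, ∑ k ∈ Finset.Ico (j + 1) L, |σ j| * |σ k|)
        - |σ i| * |σ (i + 1)| := by
  obtain ⟨m, rfl⟩ : ∃ m, L = m + 1 := ⟨L - 1, by omega⟩
  rw [Nat.add_sub_cancel] at hi ⊢
  have hmerged : |τ i| = |σ i| + |σ (i + 1)| := by
    rw [hτi, abs_add_eq_add_abs_of_mul_nonneg hsign]
  have hTV : ∑ k ∈ range m, |τ k| = ∑ k ∈ range (m + 1), |σ k| := by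
    have := sum_range_add_of_merge (g := (|τ ·|)) (h := (|σ ·|))
      (fun k hk => by rw [hτlt k hk]) (fun k hk => by rw [hτgt k hk]) hi
    rw [hmerged] at this
    exact add_right_cancel this
  have hsq : ∑ k ∈ range m, |τ k| ^ 2
      = ∑ k ∈ range (m + 1), |σ k| ^ 2 + 2 * (|σ i| * |σ (i + 1)|) := by
    have := sum_range_add_of_merge (g := (|τ ·| ^ 2)) (h := (|σ ·| ^ 2))
      (fun k hk => by rw [hτlt k hk]) (fun k hk => by rw [hτgt k hk]) hi
    rw [hmerged] at this
    linear_combination this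
  refine ⟨hTV, ?_⟩
  have hQτ := two_mul_sum_range_sum_Ico_mul (|τ ·|) m
  have hQσ := two_mul_sum_range_sum_Ico_mul (|σ ·|) (m + 1)
  rw [hTV, hsq] at hQτ
  linear_combination (hQτ - hQσ) / 2

/-- Interaction without cancellation: merging two adjacent waves of the same
sign leaves the total variation `TV = Σ |σ k|` unchanged and decreases the Glimm
interaction functional `Q = Σ_{j<k} |σ j|·|σ k|` exactly by `|σ i|·|σ (i+1)|`. -/
theorem glimm_functional_interaction_no_cancellation
    (L : ℕ) (hL : 2 ≤ L) (σ τ : ℕ → ℝ) (i : ℕ) (hi : i + 1 ≤ L - 1)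
    (hsign : 0 ≤ σ i * σ (i + 1))
    (hτlt : ∀ k < i, τ k = σ k)
    (hτi : τ i = σ i + σ (i + 1))
    (hτgt : ∀ k, i < k → τ k = σ (k + 1)) :
    (∑ k ∈ Finset.range (L - 1), |τ k|) = (∑ k ∈ Finset.range L, |σ k|) ∧
    (∑ j ∈ Finset.range (L - 1), ∑ k ∈ Finset.Ico (j + 1) (L - 1), |τ j| * |τ k|)
      = (∑ j ∈ Finset.range L, ∑ k ∈ Finset.Ico (j + 1) L, |σ j| * |σ k|)
        - |σ i| * |σ (i + 1)| :=
  glimm_functional_interaction_no_cancellation_general L σ τ i hi hsign hτlt hτi hτgt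
end

section
/- Let L ≥ 2 be a natural number, let σ : {0,…,L−1} → ℝ, and let i satisfy i + 1 ≤ L − 1 with σ_i · σ_{i+1} < 0. Define the merged sequence τ : {0,…,L−2} → ℝ by τ_k = σ_k for k < i, τ_i = σ_i + σ_{i+1}, and τ_k = σ_{k+1} for k > i. Then TV(τ) = TV(σ) − 2·min(|σ_i|, |σ_{i+1}|) and Q(τ) ≤ Q(σ), where TV(σ) = Σ_k |σ_k| and Q(σ) = Σ_{j<k} |σ_j|·|σ_k|. -/
/-!
For opposite signs `|σ i + σ (i+1)|` is the difference of `|σ i|` and `|σ (i+1)|`, i.e. their sum minus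
twice the smaller one, which gives the identity for the total variation.
For `Q`, write `2 Q = (Σ x)² - Σ x²` for the strengths `x k = |σ k|`. Replacing two adjacent strengths
`a, b ≥ 0` by a single `c ≤ a + b` lowers `Q` by `R (a + b - c) + a b ≥ 0`, where `R ≥ 0` is the total
strength of the remaining waves; here `c = |σ i + σ (i+1)| ≤ a + b` by the triangle inequality.
-/

open Finset

section Abs

variable {R : Type*} [CommRing R] [LinearOrder R] [IsStrictOrderedRing R] {a b : R}

theorem abs_add_eq_abs_sub_abs_of_mul_neg (h : a * b < 0) : |a + b| = |(|b| - |a|)| := by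
  rcases (left_ne_zero_of_mul h.ne).lt_or_gt with ha | ha
  · rw [abs_of_neg ha, abs_of_pos (pos_of_mul_neg_right h ha.le)]
    ring_nf
  · rw [abs_of_pos ha, abs_of_neg (neg_of_mul_neg_right h ha.le), abs_sub_comm]
    ring_nf

theorem abs_add_of_mul_neg (h : a * b < 0) : |a + b| = |a| + |b| - 2 * min |a| |b| := by
  rw [abs_add_eq_abs_sub_abs_of_mul_neg h, ← max_sub_min_eq_abs]
  linear_combination min_add_max |a| |b|

end Abs

theorem sum_range_merge {M : Type*} [AddCommMonoid M] {x y : ℕ → M} {n i : ℕ} (hin : i < n)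
    (hlt : ∀ k < i, y k = x k) (hgt : ∀ k, i < k → y k = x (k + 1)) :
    ∑ k ∈ range n, y k + (x i + x (i + 1)) = ∑ k ∈ range (n + 1), x k + y i := by
  obtain ⟨m, rfl⟩ : ∃ m, n = i + 1 + m := ⟨n - (i + 1), by omega⟩
  rw [show i + 1 + m + 1 = i + 1 + 1 + m by ring, sum_range_add y (i + 1) m,
    sum_range_add x (i + 1 + 1) m, sum_range_succ y i, sum_range_succ x (i + 1), sum_range_succ x i,
    sum_congr rfl fun k hk => hlt k (mem_range.1 hk),
    sum_congr rfl fun k _ => hgt (i + 1 + k) (by omega)]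
  simp only [add_right_comm _ _ 1]
  abel

section PairSum

variable {R : Type*} [CommRing R]

def pairSum (x : ℕ → R) (n : ℕ) : R :=
  ∑ j ∈ range n, ∑ k ∈ Ico (j + 1) n, x j * x k

theorem pairSum_succ (x : ℕ → R) (n : ℕ) :
    pairSum x (n + 1) = pairSum x n + (∑ j ∈ range n, x j) * x n := by
  rw [pairSum, pairSum, sum_range_succ, Ico_self, sum_empty, add_zero, sum_mul,
    ← sum_add_distrib]
  exact sum_congr rfl fun j hj => sum_Ico_succ_top (mem_range.1 hj) _

theorem two_mul_pairSum (x : ℕ → R) (n : ℕ) :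
    2 * pairSum x n = (∑ k ∈ range n, x k) ^ 2 - ∑ k ∈ range n, x k ^ 2 := by
  induction n with
  | zero => simp [pairSum]
  | succ n ih =>
    rw [pairSum_succ, sum_range_succ, sum_range_succ]
    linear_combination ih

theorem pairSum_merge_le [LinearOrder R] [IsStrictOrderedRing R] {x y : ℕ → R} {n i : ℕ}
    (hx : ∀ k, 0 ≤ x k) (hin : i < n) (hlt : ∀ k < i, y k = x k)
    (hgt : ∀ k, i < k → y k = x (k + 1)) (hyi : y i ≤ x i + x (i + 1)) :
    pairSum y n ≤ pairSum x (n + 1) := by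
  have hsum := sum_range_merge hin hlt hgt
  have hsq := sum_range_merge (x := fun k => x k ^ 2) (y := fun k => y k ^ 2) hin
    (fun k hk => by rw [hlt k hk]) (fun k hk => by rw [hgt k hk])
  have hrest : 0 ≤ ∑ k ∈ range n, y k - y i := by
    rw [← sum_erase_eq_sub (mem_range.2 hin)]
    refine sum_nonneg fun k hk => ?_
    rcases (ne_of_mem_erase hk).lt_or_gt with hk | hk
    · exact hlt k hk ▸ hx k
    · exact hgt k hk ▸ hx (k + 1)
  have hdiff : 2 * pairSum x (n + 1) - 2 * pairSum y n
      = 2 * ((∑ k ∈ range n, y k - y i) * (x i + x (i + 1) - y i) + x i * x (i + 1)) := by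
    rw [two_mul_pairSum, two_mul_pairSum]
    linear_combination (-(∑ k ∈ range (n + 1), x k + ∑ k ∈ range n, y k + x i + x (i + 1) - y i))
      * hsum + hsq
  have hdecrease : 0 ≤ (∑ k ∈ range n, y k - y i) * (x i + x (i + 1) - y i) + x i * x (i + 1) :=
    add_nonneg (mul_nonneg hrest (sub_nonneg.2 hyi)) (mul_nonneg (hx i) (hx (i + 1)))
  linarith

end PairSum

theorem glimm_functional_interaction_cancellation_general
    (L : ℕ) (σ τ : ℕ → ℝ) (i : ℕ) (hi : i + 1 ≤ L - 1)
    (hsign : σ i * σ (i + 1) < 0)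
    (hτlt : ∀ k < i, τ k = σ k)
    (hτi : τ i = σ i + σ (i + 1))
    (hτgt : ∀ k, i < k → τ k = σ (k + 1)) :
    (∑ k ∈ Finset.range (L - 1), |τ k|)
      = (∑ k ∈ Finset.range L, |σ k|) - 2 * min |σ i| |σ (i + 1)| ∧
    (∑ j ∈ Finset.range (L - 1), ∑ k ∈ Finset.Ico (j + 1) (L - 1), |τ j| * |τ k|)
      ≤ (∑ j ∈ Finset.range L, ∑ k ∈ Finset.Ico (j + 1) L, |σ j| * |σ k|) := by
  obtain ⟨n, rfl⟩ : ∃ n, L = n + 1 := ⟨L - 1, by omega⟩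
  rw [Nat.add_sub_cancel] at hi ⊢
  have hlt : ∀ k < i, |τ k| = |σ k| := fun k hk => by rw [hτlt k hk]
  have hgt : ∀ k, i < k → |τ k| = |σ (k + 1)| := fun k hk => by rw [hτgt k hk]
  have hτi_le : |τ i| ≤ |σ i| + |σ (i + 1)| := hτi ▸ abs_add_le _ _
  refine ⟨?_, pairSum_merge_le (fun k => abs_nonneg (σ k)) hi hlt hgt hτi_le⟩
  linarith [sum_range_merge hi hlt hgt, hτi ▸ abs_add_of_mul_neg hsign]

/-- Interaction with cancellation: merging two adjacent waves of opposite sign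
decreases the total variation `TV = Σ |σ k|` by twice the cancelled amount
`min (|σ i|) (|σ (i+1)|)`, and does not increase the Glimm interaction
functional `Q = Σ_{j<k} |σ j|·|σ k|`. -/
theorem glimm_functional_interaction_cancellation
    (L : ℕ) (hL : 2 ≤ L) (σ τ : ℕ → ℝ) (i : ℕ) (hi : i + 1 ≤ L - 1)
    (hsign : σ i * σ (i + 1) < 0)
    (hτlt : ∀ k < i, τ k = σ k)
    (hτi : τ i = σ i + σ (i + 1))
    (hτgt : ∀ k, i < k → τ k = σ (k + 1)) :
    (∑ k ∈ Finset.range (L - 1), |τ k|)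
      = (∑ k ∈ Finset.range L, |σ k|) - 2 * min |σ i| |σ (i + 1)| ∧
    (∑ j ∈ Finset.range (L - 1), ∑ k ∈ Finset.Ico (j + 1) (L - 1), |τ j| * |τ k|)
      ≤ (∑ j ∈ Finset.range L, ∑ k ∈ Finset.Ico (j + 1) L, |σ j| * |σ k|) :=
  glimm_functional_interaction_cancellation_general L σ τ i hi hsign hτlt hτi hτgt
end
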